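/- arXiv:1307.7957 — 2 statements merged into one kernel-verified Lean document; each statement's English description precedes it below -/
import Mathlib

section
/- Consider a kinetic planar quadratic system x' = F(x,y), y' = G(x,y) (each a quadratic polynomial; coefficients of monomials in F not containing x, and in G not containing y, are nonnegative). If V(x,y) = (x+a)^2 + (y+b)^2 with a ≥ 0, b ≥ 0 is a first integral, then there exist A, B ≥ 0 with F(x,y) = A y(y+b) − B x(y+b) and G(x,y) = B x(x+a) − A y(x+a). -/
/-!
Comparing coefficients in `(x + a) F + (y + b) G ≡ 0` gives `F = (y + b) L` and `G = -(x + a) L`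
for the linear form `L = B₁ x + C₁ y + γ`, where `γ = E₁ - b C₁`. Reading off the kinetic
coefficients, `F₁ = b γ` and `E₁ = b C₁ + γ` force `γ ≥ 0` (the second one when `b = 0`), and
symmetrically `F₂ = -a γ` and `D₂ = a A₂ - γ` force `γ ≤ 0`. So `γ = 0`, and `A = C₁`,
`B = A₂ = -B₁` work.
-/

open Polynomial

section CoeffsEqZero

variable {R : Type*} [CommRing R] [IsDomain R] [Infinite R]

theorem cubic_coeffs_eq_zero {c₃ c₂ c₁ c₀ : R}
    (h : ∀ x, c₃ * x ^ 3 + c₂ * x ^ 2 + c₁ * x + c₀ = 0) :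
    c₃ = 0 ∧ c₂ = 0 ∧ c₁ = 0 ∧ c₀ = 0 := by
  have hp : C c₃ * X ^ 3 + C c₂ * X ^ 2 + C c₁ * X + C c₀ = 0 :=
    Polynomial.funext (by simpa using h)
  refine ⟨?_, ?_, ?_, ?_⟩
  · simpa using congrArg (coeff · 3) hp
  · simpa using congrArg (coeff · 2) hp
  · simpa using congrArg (coeff · 1) hp
  · simpa using congrArg (coeff · 0) hp

theorem bivariate_cubic_coeffs_eq_zero {c₃₀ c₂₁ c₁₂ c₀₃ c₂₀ c₁₁ c₀₂ c₁₀ c₀₁ c₀₀ : R}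
    (h : ∀ x y, c₃₀ * x ^ 3 + c₂₁ * x ^ 2 * y + c₁₂ * x * y ^ 2 + c₀₃ * y ^ 3
      + c₂₀ * x ^ 2 + c₁₁ * x * y + c₀₂ * y ^ 2 + c₁₀ * x + c₀₁ * y + c₀₀ = 0) :
    c₃₀ = 0 ∧ c₂₁ = 0 ∧ c₁₂ = 0 ∧ c₀₃ = 0 ∧ c₂₀ = 0 ∧ c₁₁ = 0 ∧ c₀₂ = 0 ∧
      c₁₀ = 0 ∧ c₀₁ = 0 ∧ c₀₀ = 0 := by
  have in_x (y : R) := cubic_coeffs_eq_zero (c₃ := c₃₀) (c₂ := c₂₁ * y + c₂₀)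
    (c₁ := c₁₂ * y ^ 2 + c₁₁ * y + c₁₀) (c₀ := c₀₃ * y ^ 3 + c₀₂ * y ^ 2 + c₀₁ * y + c₀₀)
    fun x ↦ by linear_combination h x y
  obtain ⟨-, -, h₂₁, h₂₀⟩ :=
    cubic_coeffs_eq_zero (c₃ := (0 : R)) (c₂ := 0) (c₁ := c₂₁) (c₀ := c₂₀)
      fun y ↦ by linear_combination (in_x y).2.1
  obtain ⟨-, h₁₂, h₁₁, h₁₀⟩ :=
    cubic_coeffs_eq_zero (c₃ := (0 : R)) (c₂ := c₁₂) (c₁ := c₁₁) (c₀ := c₁₀)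
      fun y ↦ by linear_combination (in_x y).2.2.1
  obtain ⟨h₀₃, h₀₂, h₀₁, h₀₀⟩ := cubic_coeffs_eq_zero fun y ↦ (in_x y).2.2.2
  exact ⟨(in_x 0).1, h₂₁, h₁₂, h₀₃, h₂₀, h₁₁, h₀₂, h₁₀, h₀₁, h₀₀⟩

end CoeffsEqZero

theorem nonneg_of_mul_nonneg_of_mul_add_nonneg {R : Type*} [Semiring R] [LinearOrder R]
    [PosMulStrictMono R] {b β γ : R} (hb : 0 ≤ b)
    (hbγ : 0 ≤ b * γ) (hβγ : 0 ≤ b * β + γ) : 0 ≤ γ := by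
  rcases hb.eq_or_lt with rfl | hb
  · simpa using hβγ
  · exact nonneg_of_mul_nonneg_right hbγ hb

/-- Shifted sum of squares `V(x,y) = (x+a)² + (y+b)²` (a, b ≥ 0) as a first
integral of a kinetic planar quadratic system. -/
theorem stmt_12 (A₁ B₁ C₁ D₁ E₁ F₁ A₂ B₂ C₂ D₂ E₂ F₂ a b : ℝ)
    (F G : ℝ → ℝ → ℝ)
    (hFdef : ∀ x y, F x y =
      A₁ * x ^ 2 + B₁ * x * y + C₁ * y ^ 2 + D₁ * x + E₁ * y + F₁)
    (hGdef : ∀ x y, G x y =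
      A₂ * x ^ 2 + B₂ * x * y + C₂ * y ^ 2 + D₂ * x + E₂ * y + F₂)
    -- kinetic: coefficients of monomials in F not containing x,
    -- and in G not containing y, are nonnegative
    (hC₁ : 0 ≤ C₁) (hE₁ : 0 ≤ E₁) (hF₁ : 0 ≤ F₁)
    (hA₂ : 0 ≤ A₂) (hD₂ : 0 ≤ D₂) (hF₂ : 0 ≤ F₂)
    (ha : 0 ≤ a) (hb : 0 ≤ b)
    -- V is a first integral:
    (hfi : ∀ x y : ℝ, 2 * (x + a) * F x y + 2 * (y + b) * G x y = 0) :
    ∃ A B : ℝ, 0 ≤ A ∧ 0 ≤ B ∧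
      (∀ x y : ℝ, F x y = A * y * (y + b) - B * x * (y + b)) ∧
      (∀ x y : ℝ, G x y = B * x * (x + a) - A * y * (x + a)) := by
  obtain ⟨h₃₀, h₂₁, h₁₂, h₀₃, h₂₀, h₁₁, h₀₂, h₁₀, h₀₁, -⟩ :=
    bivariate_cubic_coeffs_eq_zero (c₃₀ := A₁) (c₂₁ := B₁ + A₂) (c₁₂ := C₁ + B₂) (c₀₃ := C₂)
      (c₂₀ := a * A₁ + D₁ + b * A₂) (c₁₁ := a * B₁ + E₁ + D₂ + b * B₂)
      (c₀₂ := a * C₁ + E₂ + b * C₂) (c₁₀ := a * D₁ + F₁ + b * D₂)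
      (c₀₁ := a * E₁ + F₂ + b * E₂) (c₀₀ := a * F₁ + b * F₂)
      fun x y ↦ by
        linear_combination hfi x y / 2 - (x + a) * hFdef x y - (y + b) * hGdef x y
  obtain ⟨γ, hE₁γ⟩ : ∃ γ, E₁ = b * C₁ + γ := ⟨E₁ - b * C₁, by ring⟩
  have hF₁γ : F₁ = b * γ := by
    linear_combination h₁₀ - a * h₂₀ - b * h₁₁ + a ^ 2 * h₃₀ + a * b * h₂₁ + b ^ 2 * h₁₂ + b * hE₁γ
  have hF₂γ : F₂ = a * -γ := by
    linear_combination h₀₁ - b * h₀₂ + b ^ 2 * h₀₃ - a * hE₁γ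
  have hD₂γ : D₂ = a * A₂ + -γ := by
    linear_combination h₁₁ - a * h₂₁ - b * h₁₂ - hE₁γ
  have hγ : γ = 0 := le_antisymm
    (neg_nonneg.mp (nonneg_of_mul_nonneg_of_mul_add_nonneg ha (hF₂γ ▸ hF₂) (hD₂γ ▸ hD₂)))
    (nonneg_of_mul_nonneg_of_mul_add_nonneg hb (hF₁γ ▸ hF₁) (hE₁γ ▸ hE₁))
  refine ⟨C₁, A₂, hC₁, hA₂, fun x y ↦ ?_, fun x y ↦ ?_⟩
  · rw [hFdef]
    linear_combination x ^ 2 * h₃₀ + x * y * h₂₁ + x * (h₂₀ - a * h₃₀) + y * (hE₁γ + hγ)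
      + hF₁γ + b * hγ
  · rw [hGdef]
    linear_combination x * y * h₁₂ + y ^ 2 * h₀₃ + x * (hD₂γ - hγ) + y * (h₀₂ - b * h₀₃)
      + hF₂γ - a * hγ
end

section
/- Let K, L ≥ 1 and consider a quadratic polynomial system x_k' = X_k, y_l' = Y_l, z' = Z on ℝ^{K+L+1} that is kinetic and kinetically mass conserving with positive weights ϱ^x_k, ϱ^y_l, ϱ^z. If V = Σ_k a_k x_k^2 − Σ_l b_l y_l^2 (all a_k, b_l > 0) is a first integral, then there exist A_{k,l} ≥ 0 such that X_k = Σ_l b_l A_{k,l} y_l z, Y_l = Σ_k a_k A_{k,l} x_k z, and Z = −(Σ_k ϱ^x_k X_k + Σ_l ϱ^y_l Y_l)/ϱ^z. -/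
/-- Embedding of an `x`-index into the combined index set of the variables
`x_1,…,x_K, y_1,…,y_L, z`. -/
def ixIdx (K L : ℕ) (k : Fin K) : Fin (K + L + 1) := ⟨k.1, by have := k.2; omega⟩

/-- Embedding of a `y`-index. -/
def iyIdx (K L : ℕ) (l : Fin L) : Fin (K + L + 1) := ⟨K + l.1, by have := l.2; omega⟩

/-- The index of the variable `z`. -/
def izIdx (K L : ℕ) : Fin (K + L + 1) := ⟨K + L, by omega⟩

open Finset

/-!
With `W = (2a, −2b, 0)` one has `V = ½ Σ W_i x_i²`, and the hypotheses become two polynomial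
identities, `Σ ϱ_i P_i = 0` and `Σ W_i x_i P_i = 0`, which hold coefficientwise. In the mass
identity each coefficient is a `ϱ`-weighted sum of terms that kineticity (together with the
diagonal cubic coefficients of the first integral) makes nonnegative, so each term vanishes:
outside the row of `z`, every monomial not containing `z` has coefficient zero. What survives
in row `i ≠ z` is `Σ_j S_ij x_j z`, and the coefficient of `x_i x_j z` in the first integral
gives `W_i S_ij + W_j S_ji = 0`. For `i, j` in the same block the `W`'s have the same sign and
the `S`'s are nonnegative, so both vanish; for `i = x_k`, `j = y_l` it gives
`a_k S_ij = b_l S_ji`, whence `A_kl = S_ij / b_l`. The row of `z` is read off from mass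
conservation.
-/

section Coefficients
variable {ι : Type*} [Fintype ι]

theorem two_mul_sum_sum_mul_mul (M : ι → ι → ℝ) (x : ι → ℝ) :
    2 * ∑ j, ∑ k, M j k * x j * x k = ∑ j, ∑ k, (M j k + M k j) * x j * x k := by
  have hswap : ∑ j, ∑ k, M k j * x j * x k = ∑ j, ∑ k, M j k * x j * x k := by
    rw [sum_comm]
    exact sum_congr rfl fun j _ => sum_congr rfl fun k _ => by ring
  simp only [add_mul, sum_add_distrib, hswap]
  ring

theorem sum_sum_mul_mul_eq_of_symm {M N : ι → ι → ℝ} (h : ∀ j k, M j k + M k j = N j k + N k j)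
    (x : ι → ℝ) : ∑ j, ∑ k, M j k * x j * x k = ∑ j, ∑ k, N j k * x j * x k := by
  have := two_mul_sum_sum_mul_mul M x
  simp only [h, ← two_mul_sum_sum_mul_mul N x] at this
  linarith

variable [DecidableEq ι]

theorem coeff_eq_zero_of_forall_linear {E : ι → ℝ} (h : ∀ x : ι → ℝ, ∑ i, E i * x i = 0)
    (i : ι) : E i = 0 := by
  simpa [mul_ite] using h (fun m => if m = i then 1 else 0)

theorem coeff_diag_eq_zero_of_forall_quadratic {M : ι → ι → ℝ}
    (h : ∀ x : ι → ℝ, ∑ i, ∑ j, M i j * x i * x j = 0) (i : ι) : M i i = 0 := by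
  simpa [mul_ite, ite_mul] using h (fun m => if m = i then 1 else 0)

theorem symm_coeff_eq_zero_of_forall_quadratic {M : ι → ι → ℝ}
    (h : ∀ x : ι → ℝ, ∑ i, ∑ j, M i j * x i * x j = 0) (i j : ι) : M i j + M j i = 0 := by
  have hi := coeff_diag_eq_zero_of_forall_quadratic h i
  have hj := coeff_diag_eq_zero_of_forall_quadratic h j
  have hij := h (fun m => (if m = i then 1 else 0) + (if m = j then 1 else 0))
  simp [mul_ite, mul_add, sum_add_distrib] at hij
  linarith

theorem coeff_diag_eq_zero_of_forall_cubic {C : ι → ι → ι → ℝ}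
    (h : ∀ x : ι → ℝ, ∑ i, ∑ j, ∑ k, C i j k * x i * x j * x k = 0) (i : ι) :
    C i i i = 0 := by
  simpa [mul_ite, ite_mul] using h (fun m => if m = i then 1 else 0)

theorem symm_coeff_two_eq_zero_of_forall_cubic {C : ι → ι → ι → ℝ}
    (h : ∀ x : ι → ℝ, ∑ i, ∑ j, ∑ k, C i j k * x i * x j * x k = 0) (i j : ι) :
    C i i j + C i j i + C j i i = 0 := by
  have hi := coeff_diag_eq_zero_of_forall_cubic h i
  have hj := coeff_diag_eq_zero_of_forall_cubic h j
  have hplus := h (fun m => (if m = i then 1 else 0) + (if m = j then 1 else 0))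
  have hminus := h (fun m => (if m = i then 1 else 0) + (if m = j then -1 else 0))
  simp [mul_ite, mul_add, sum_add_distrib] at hplus hminus
  linarith

theorem symm_coeff_eq_zero_of_forall_cubic {C : ι → ι → ι → ℝ}
    (h : ∀ x : ι → ℝ, ∑ i, ∑ j, ∑ k, C i j k * x i * x j * x k = 0) (i j k : ι) :
    C i j k + C i k j + C j i k + C j k i + C k i j + C k j i = 0 := by
  have := coeff_diag_eq_zero_of_forall_cubic h i
  have := coeff_diag_eq_zero_of_forall_cubic h j
  have := coeff_diag_eq_zero_of_forall_cubic h k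
  have := symm_coeff_two_eq_zero_of_forall_cubic h i j
  have := symm_coeff_two_eq_zero_of_forall_cubic h j i
  have := symm_coeff_two_eq_zero_of_forall_cubic h i k
  have := symm_coeff_two_eq_zero_of_forall_cubic h k i
  have := symm_coeff_two_eq_zero_of_forall_cubic h j k
  have := symm_coeff_two_eq_zero_of_forall_cubic h k j
  have hijk := h (fun m => (if m = i then 1 else 0) + (if m = j then 1 else 0) +
    (if m = k then 1 else 0))
  simp [mul_ite, mul_add, sum_add_distrib] at hijk
  linarith

end Coefficients

theorem eq_zero_of_forall_quadratic {A B C : ℝ} (h : ∀ t : ℝ, t ^ 2 * A + t * B + C = 0) :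
    A = 0 ∧ B = 0 ∧ C = 0 := by
  have h0 := h 0; have h1 := h 1; have h2 := h (-1)
  norm_num at h0 h1 h2
  refine ⟨?_, ?_, ?_⟩ <;> linarith

theorem eq_zero_of_forall_cubic {A B C : ℝ} (h : ∀ t : ℝ, t ^ 3 * A + t ^ 2 * B + t * C = 0) :
    A = 0 ∧ B = 0 ∧ C = 0 := by
  have h1 := h 1; have h2 := h (-1); have h3 := h 2
  norm_num at h1 h2 h3
  refine ⟨?_, ?_, ?_⟩ <;> linarith

theorem eq_zero_of_weighted_sum_eq_zero {ι : Type*} [Fintype ι] {ϱ f : ι → ℝ}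
    (hϱ : ∀ i, 0 < ϱ i) (hf : ∀ i, 0 ≤ f i) (h : ∑ i, ϱ i * f i = 0) (i : ι) : f i = 0 := by
  have := (sum_eq_zero_iff_of_nonneg fun j _ => mul_nonneg (hϱ j).le (hf j)).mp h i (mem_univ i)
  exact (mul_eq_zero.mp this).resolve_left (hϱ i).ne'

section QuadraticField
variable {ι : Type*} [Fintype ι]

def quadraticField (Q : ι → ι → ι → ℝ) (R : ι → ι → ℝ) (c : ι → ℝ) (i : ι) (x : ι → ℝ) : ℝ :=
  (∑ j, ∑ k, Q i j k * x j * x k) + (∑ j, R i j * x j) + c i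

def IsMassConserving (ϱ : ι → ℝ) (P : ι → (ι → ℝ) → ℝ) : Prop :=
  ∀ x, ∑ i, ϱ i * P i x = 0

/-- `½ Σ W_i x_i²` is a first integral of `x' = P x`. -/
def IsDiagonalFirstIntegral (W : ι → ℝ) (P : ι → (ι → ℝ) → ℝ) : Prop :=
  ∀ x, ∑ i, W i * x i * P i x = 0

variable {Q : ι → ι → ι → ℝ} {R : ι → ι → ℝ} {c : ι → ℝ} {W ϱ : ι → ℝ}

theorem sum_mul_quadraticField_smul (x : ι → ℝ) (t : ℝ) :
    ∑ i, ϱ i * quadraticField Q R c i (t • x) =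
      t ^ 2 * (∑ j, ∑ k, (∑ i, ϱ i * Q i j k) * x j * x k)
      + t * ∑ j, (∑ i, ϱ i * R i j) * x j + ∑ i, ϱ i * c i := by
  simp only [quadraticField, Pi.smul_apply, smul_eq_mul, mul_sum, sum_mul, mul_add,
    sum_add_distrib]
  congr 1; congr 1
  · rw [sum_comm]
    refine sum_congr rfl fun j _ => ?_
    rw [sum_comm]
    exact sum_congr rfl fun k _ => sum_congr rfl fun i _ => by ring
  · rw [sum_comm]
    exact sum_congr rfl fun j _ => sum_congr rfl fun i _ => by ring

theorem sum_mul_mul_quadraticField_smul (x : ι → ℝ) (t : ℝ) :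
    ∑ i, W i * (t • x) i * quadraticField Q R c i (t • x) =
      t ^ 3 * (∑ i, ∑ j, ∑ k, (W i * Q i j k) * x i * x j * x k)
      + t ^ 2 * (∑ i, ∑ j, (W i * R i j) * x i * x j) + t * ∑ i, (W i * c i) * x i := by
  simp only [quadraticField, Pi.smul_apply, smul_eq_mul, mul_sum, mul_add, sum_add_distrib]
  congr 1; congr 1
  all_goals refine sum_congr rfl fun i _ => ?_
  · exact sum_congr rfl fun j _ => sum_congr rfl fun k _ => by ring
  · exact sum_congr rfl fun j _ => by ring
  · ring

variable [DecidableEq ι]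

theorem IsMassConserving.quadratic_coeff (h : IsMassConserving ϱ (quadraticField Q R c))
    (j k : ι) : ∑ i, ϱ i * (Q i j k + Q i k j) = 0 := by
  have hq x := (eq_zero_of_forall_quadratic fun t => (sum_mul_quadraticField_smul x t).symm.trans
    (h (t • x))).1
  simpa [mul_add, sum_add_distrib] using symm_coeff_eq_zero_of_forall_quadratic hq j k

theorem IsMassConserving.linear_coeff (h : IsMassConserving ϱ (quadraticField Q R c)) (j : ι) :
    ∑ i, ϱ i * R i j = 0 :=
  coeff_eq_zero_of_forall_linear (fun x => (eq_zero_of_forall_quadratic fun t =>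
    (sum_mul_quadraticField_smul x t).symm.trans (h (t • x))).2.1) j

theorem IsDiagonalFirstIntegral.cubic_coeff (h : IsDiagonalFirstIntegral W (quadraticField Q R c))
    (i j k : ι) :
    W i * (Q i j k + Q i k j) + W j * (Q j i k + Q j k i) + W k * (Q k i j + Q k j i) = 0 := by
  have hq x := (eq_zero_of_forall_cubic fun t => (sum_mul_mul_quadraticField_smul x t).symm.trans
    (h (t • x))).1
  linarith [symm_coeff_eq_zero_of_forall_cubic hq i j k]

theorem IsDiagonalFirstIntegral.quadratic_coeff
    (h : IsDiagonalFirstIntegral W (quadraticField Q R c)) (i j : ι) :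
    W i * R i j + W j * R j i = 0 :=
  symm_coeff_eq_zero_of_forall_quadratic (fun x => (eq_zero_of_forall_cubic fun t =>
    (sum_mul_mul_quadraticField_smul x t).symm.trans (h (t • x))).2.1) i j

theorem IsDiagonalFirstIntegral.const_coeff
    (h : IsDiagonalFirstIntegral W (quadraticField Q R c)) (i : ι) : W i * c i = 0 :=
  coeff_eq_zero_of_forall_linear (fun x => (eq_zero_of_forall_cubic fun t =>
    (sum_mul_mul_quadraticField_smul x t).symm.trans (h (t • x))).2.2) i

end QuadraticField

section Kinetic
variable {ι : Type*} [Fintype ι] [DecidableEq ι] {Q : ι → ι → ι → ℝ} {R : ι → ι → ℝ}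
  {c : ι → ℝ} {W ϱ : ι → ℝ}

theorem IsDiagonalFirstIntegral.coeff_self_eq_zero
    (hfi : IsDiagonalFirstIntegral W (quadraticField Q R c)) {i : ι} (hi : W i ≠ 0) :
    Q i i i = 0 := by
  have h := hfi.cubic_coeff i i i
  exact (mul_eq_zero.mp (by linarith : W i * Q i i i = 0)).resolve_left hi

theorem IsDiagonalFirstIntegral.coeff_diag_eq_zero_of_weight_eq_zero
    (hfi : IsDiagonalFirstIntegral W (quadraticField Q R c)) {i z : ι} (hz : W z = 0)
    (hi : W i ≠ 0) : Q i z z = 0 := by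
  have h := hfi.cubic_coeff z z i
  rw [hz] at h
  exact (mul_eq_zero.mp (by linarith : W i * Q i z z = 0)).resolve_left hi

theorem IsDiagonalFirstIntegral.weighted_coeff_add_eq_zero
    (hfi : IsDiagonalFirstIntegral W (quadraticField Q R c)) {z : ι} (hz : W z = 0) (i j : ι) :
    W i * (Q i j z + Q i z j) + W j * (Q j i z + Q j z i) = 0 := by
  have h := hfi.cubic_coeff i j z
  rw [hz] at h
  linarith

theorem IsDiagonalFirstIntegral.linear_coeff_eq_zero_of_weight_eq_zero
    (hfi : IsDiagonalFirstIntegral W (quadraticField Q R c)) {i z : ι} (hz : W z = 0)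
    (hi : W i ≠ 0) : R i z = 0 := by
  have h := hfi.quadratic_coeff i z
  rw [hz, zero_mul, add_zero] at h
  exact (mul_eq_zero.mp h).resolve_left hi

theorem coeff_diag_eq_zero_of_weight_ne_zero (hϱ : ∀ i, 0 < ϱ i)
    (hmc : IsMassConserving ϱ (quadraticField Q R c))
    (hfi : IsDiagonalFirstIntegral W (quadraticField Q R c))
    (hQ1 : ∀ i j, j ≠ i → 0 ≤ Q i j j) {j : ι} (hj : W j ≠ 0) (i : ι) : Q i j j = 0 := by
  have hnonneg : ∀ i, 0 ≤ Q i j j + Q i j j := by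
    intro i
    rcases eq_or_ne i j with rfl | hij
    · rw [hfi.coeff_self_eq_zero hj, add_zero]
    · linarith [hQ1 i j hij.symm]
  linarith [eq_zero_of_weighted_sum_eq_zero hϱ hnonneg (hmc.quadratic_coeff j j) i]

theorem symm_coeff_eq_zero_of_weight_ne_zero (hϱ : ∀ i, 0 < ϱ i)
    (hmc : IsMassConserving ϱ (quadraticField Q R c))
    (hfi : IsDiagonalFirstIntegral W (quadraticField Q R c))
    (hQ1 : ∀ i j, j ≠ i → 0 ≤ Q i j j)
    (hQ2 : ∀ i j k, j ≠ i → k ≠ i → j ≠ k → 0 ≤ Q i j k + Q i k j)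
    {j k : ι} (hj : W j ≠ 0) (hk : W k ≠ 0) (i : ι) : Q i j k + Q i k j = 0 := by
  rcases eq_or_ne j k with rfl | hjk
  · rw [coeff_diag_eq_zero_of_weight_ne_zero hϱ hmc hfi hQ1 hj i, add_zero]
  -- in its own row the coefficient of `x_j x_k` is fixed by the cubic monomial `x_j² x_k`
  have hown : ∀ {j k : ι}, W j ≠ 0 → W k ≠ 0 → Q j j k + Q j k j = 0 := by
    intro j k hj hk
    have h := hfi.cubic_coeff j j k
    rw [coeff_diag_eq_zero_of_weight_ne_zero hϱ hmc hfi hQ1 hj k] at h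
    exact (mul_eq_zero.mp (by linarith : W j * (Q j j k + Q j k j) = 0)).resolve_left hj
  have hnonneg : ∀ i, 0 ≤ Q i j k + Q i k j := by
    intro i
    rcases eq_or_ne i j with rfl | hij
    · exact (hown hj hk).ge
    rcases eq_or_ne i k with rfl | hik
    · exact add_comm (Q i j i) _ ▸ (hown hk hj).ge
    exact hQ2 i j k hij.symm hik.symm hjk
  exact eq_zero_of_weighted_sum_eq_zero hϱ hnonneg (hmc.quadratic_coeff j k) i

theorem linear_coeff_eq_zero_of_weight_ne_zero (hϱ : ∀ i, 0 < ϱ i)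
    (hmc : IsMassConserving ϱ (quadraticField Q R c))
    (hfi : IsDiagonalFirstIntegral W (quadraticField Q R c)) (hR : ∀ i j, j ≠ i → 0 ≤ R i j)
    {j : ι} (hj : W j ≠ 0) (i : ι) : R i j = 0 := by
  have hnonneg : ∀ i, 0 ≤ R i j := by
    intro i
    rcases eq_or_ne i j with rfl | hij
    · have h := hfi.quadratic_coeff i i
      rw [(mul_eq_zero.mp (by linarith : W i * R i i = 0)).resolve_left hj]
    · exact hR i j hij.symm
  exact eq_zero_of_weighted_sum_eq_zero hϱ hnonneg (hmc.linear_coeff j) i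

theorem quadraticField_eq_sum_mul_mul (hϱ : ∀ i, 0 < ϱ i)
    (hmc : IsMassConserving ϱ (quadraticField Q R c))
    (hfi : IsDiagonalFirstIntegral W (quadraticField Q R c))
    (hQ1 : ∀ i j, j ≠ i → 0 ≤ Q i j j)
    (hQ2 : ∀ i j k, j ≠ i → k ≠ i → j ≠ k → 0 ≤ Q i j k + Q i k j)
    (hR : ∀ i j, j ≠ i → 0 ≤ R i j) {z : ι} (hz : W z = 0) (hW : ∀ j, j ≠ z → W j ≠ 0)
    {i : ι} (hi : i ≠ z) (x : ι → ℝ) :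
    quadraticField Q R c i x = ∑ j, (Q i j z + Q i z j) * x j * x z := by
  have hR0 : ∀ j, R i j = 0 := fun j => by
    rcases eq_or_ne j z with rfl | hj
    · exact hfi.linear_coeff_eq_zero_of_weight_eq_zero hz (hW i hi)
    · exact linear_coeff_eq_zero_of_weight_ne_zero hϱ hmc hfi hR (hW j hj) i
  have hc0 : c i = 0 := (mul_eq_zero.mp (hfi.const_coeff i)).resolve_left (hW i hi)
  have hQzz := hfi.coeff_diag_eq_zero_of_weight_eq_zero hz (hW i hi)
  -- the symmetrised coefficients are those of `Σ_j (Q i j z + Q i z j) x_j x_z`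
  have hsymm (j k : ι) : Q i j k + Q i k j =
      (if k = z then Q i j z + Q i z j else 0) + (if j = z then Q i k z + Q i z k else 0) := by
    by_cases hj : j = z <;> by_cases hk : k = z
    · subst hj hk; simp [hQzz]
    · subst hj; simp [hk, add_comm]
    · subst hk; simp [hj]
    · simp [hj, hk, symm_coeff_eq_zero_of_weight_ne_zero hϱ hmc hfi hQ1 hQ2 (hW j hj) (hW k hk) i]
  simp only [quadraticField, hR0, zero_mul, sum_const_zero, hc0, add_zero]
  rw [sum_sum_mul_mul_eq_of_symm hsymm]
  simp [ite_mul]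

theorem coeff_eq_zero_of_weight_mul_pos (hfi : IsDiagonalFirstIntegral W (quadraticField Q R c))
    (hQ2 : ∀ i j k, j ≠ i → k ≠ i → j ≠ k → 0 ≤ Q i j k + Q i k j) {z : ι} (hz : W z = 0)
    {i j : ι} (hij : 0 < W i * W j) : Q i j z + Q i z j = 0 := by
  have h := hfi.weighted_coeff_add_eq_zero hz i j
  have hWi : W i ≠ 0 := left_ne_zero_of_mul hij.ne'
  rcases eq_or_ne i j with rfl | hne
  · exact (mul_eq_zero.mp (by linarith : W i * (Q i i z + Q i z i) = 0)).resolve_left hWi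
  have hiz : i ≠ z := by rintro rfl; simp [hz] at hij
  have hjz : j ≠ z := by rintro rfl; simp [hz] at hij
  have h1 := hQ2 i j z hne.symm hiz.symm hjz
  have h2 := hQ2 j i z hne hjz.symm hiz
  have key : W i * W i * (Q i j z + Q i z j) + W i * W j * (Q j i z + Q j z i) = 0 := by
    linear_combination W i * h
  have : W i * W i * (Q i j z + Q i z j) = 0 := by
    linarith [mul_nonneg hij.le h2, mul_nonneg (mul_self_nonneg (W i)) h1]
  exact (mul_eq_zero.mp this).resolve_left (mul_ne_zero hWi hWi)

end Kinetic

section Blocks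
variable {K L : ℕ}

theorem sum_univ_eq_sum_ixIdx_add_sum_iyIdx_add (f : Fin (K + L + 1) → ℝ) :
    ∑ i, f i = (∑ k, f (ixIdx K L k)) + (∑ l, f (iyIdx K L l)) + f (izIdx K L) := by
  rw [Fin.sum_univ_castSucc, Fin.sum_univ_add]
  rfl

theorem ixIdx_ne_izIdx (k : Fin K) : ixIdx K L k ≠ izIdx K L := by
  simp [ixIdx, izIdx, Fin.ext_iff]; omega

theorem iyIdx_ne_izIdx (l : Fin L) : iyIdx K L l ≠ izIdx K L := by
  simp [iyIdx, izIdx, Fin.ext_iff]; omega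

theorem iyIdx_ne_ixIdx (k : Fin K) (l : Fin L) : iyIdx K L l ≠ ixIdx K L k := by
  simp [ixIdx, iyIdx, Fin.ext_iff]; omega

/-- `V = Σ a_k x_k² − Σ b_l y_l²` is `½ Σ W_i x_i²` for these weights `W`. -/
def firstIntegralWeight (a : Fin K → ℝ) (b : Fin L → ℝ) : Fin (K + L + 1) → ℝ :=
  Fin.snoc (Fin.append (fun k => 2 * a k) fun l => -(2 * b l)) 0

variable (a : Fin K → ℝ) (b : Fin L → ℝ)

@[simp]
theorem firstIntegralWeight_ixIdx (k : Fin K) : firstIntegralWeight a b (ixIdx K L k) = 2 * a k :=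
  (Fin.snoc_castSucc (α := fun _ => ℝ) ..).trans (Fin.append_left ..)

@[simp]
theorem firstIntegralWeight_iyIdx (l : Fin L) :
    firstIntegralWeight a b (iyIdx K L l) = -(2 * b l) :=
  (Fin.snoc_castSucc (α := fun _ => ℝ) ..).trans (Fin.append_right ..)

@[simp]
theorem firstIntegralWeight_izIdx : firstIntegralWeight a b (izIdx K L) = 0 :=
  Fin.snoc_last (α := fun _ => ℝ) ..

variable {a b}

theorem firstIntegralWeight_ne_zero (ha : ∀ k, 0 < a k) (hb : ∀ l, 0 < b l)
    {i : Fin (K + L + 1)} (hi : i ≠ izIdx K L) : firstIntegralWeight a b i ≠ 0 := by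
  induction i using Fin.lastCases with
  | last => exact absurd rfl hi
  | cast j =>
    induction j using Fin.addCases with
    | left k => exact (firstIntegralWeight_ixIdx a b k).trans_ne (by linarith [ha k])
    | right l => exact (firstIntegralWeight_iyIdx a b l).trans_ne (by linarith [hb l])

theorem firstIntegralWeight_ixIdx_mul_pos (ha : ∀ k, 0 < a k) (k k' : Fin K) :
    0 < firstIntegralWeight a b (ixIdx K L k) * firstIntegralWeight a b (ixIdx K L k') := by
  rw [firstIntegralWeight_ixIdx, firstIntegralWeight_ixIdx]
  exact mul_pos (by linarith [ha k]) (by linarith [ha k'])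

theorem firstIntegralWeight_iyIdx_mul_pos (hb : ∀ l, 0 < b l) (l l' : Fin L) :
    0 < firstIntegralWeight a b (iyIdx K L l) * firstIntegralWeight a b (iyIdx K L l') := by
  rw [firstIntegralWeight_iyIdx, firstIntegralWeight_iyIdx]
  exact mul_pos_of_neg_of_neg (by linarith [hb l]) (by linarith [hb l'])

theorem isDiagonalFirstIntegral_firstIntegralWeight
    {P : Fin (K + L + 1) → (Fin (K + L + 1) → ℝ) → ℝ}
    (h : ∀ x : Fin (K + L + 1) → ℝ,
      (∑ k, 2 * a k * x (ixIdx K L k) * P (ixIdx K L k) x) -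
      (∑ l, 2 * b l * x (iyIdx K L l) * P (iyIdx K L l) x) = 0) :
    IsDiagonalFirstIntegral (firstIntegralWeight a b) P := fun x => by
  simp only [sum_univ_eq_sum_ixIdx_add_sum_iyIdx_add, firstIntegralWeight_ixIdx,
    firstIntegralWeight_iyIdx, firstIntegralWeight_izIdx, neg_mul, sum_neg_distrib, zero_mul,
    add_zero, ← sub_eq_add_neg]
  exact h x

theorem IsMassConserving.apply_izIdx_eq {ϱ : Fin (K + L + 1) → ℝ}
    {P : Fin (K + L + 1) → (Fin (K + L + 1) → ℝ) → ℝ} (hmc : IsMassConserving ϱ P)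
    (hϱ : ϱ (izIdx K L) ≠ 0) (x : Fin (K + L + 1) → ℝ) :
    P (izIdx K L) x = -(((∑ k, ϱ (ixIdx K L k) * P (ixIdx K L k) x) +
      (∑ l, ϱ (iyIdx K L l) * P (iyIdx K L l) x)) / ϱ (izIdx K L)) := by
  have h := hmc x
  rw [sum_univ_eq_sum_ixIdx_add_sum_iyIdx_add] at h
  field_simp
  linarith

end Blocks

theorem stmt_16_general (K L : ℕ)
    (Q : Fin (K + L + 1) → Fin (K + L + 1) → Fin (K + L + 1) → ℝ)
    (R : Fin (K + L + 1) → Fin (K + L + 1) → ℝ)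
    (c : Fin (K + L + 1) → ℝ)
    (P : Fin (K + L + 1) → (Fin (K + L + 1) → ℝ) → ℝ)
    -- P is a quadratic polynomial system:
    (hP : ∀ i x, P i x =
      (∑ j, ∑ k, Q i j k * x j * x k) + (∑ j, R i j * x j) + c i)
    -- the system is kinetic (monomials not containing the own variable
    -- have nonnegative coefficients):
    (hQ1 : ∀ i j, j ≠ i → 0 ≤ Q i j j)
    (hQ2 : ∀ i j k, j ≠ i → k ≠ i → j ≠ k → 0 ≤ Q i j k + Q i k j)
    (hR : ∀ i j, j ≠ i → 0 ≤ R i j)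
    -- the system is kinetically mass conserving with positive weights ϱ:
    (ϱ : Fin (K + L + 1) → ℝ) (hϱ : ∀ i, 0 < ϱ i)
    (hmc : ∀ x : Fin (K + L + 1) → ℝ, ∑ i, ϱ i * P i x = 0)
    -- V = Σ a_k x_k² − Σ b_l y_l² is a first integral:
    (a : Fin K → ℝ) (b : Fin L → ℝ)
    (hapos : ∀ k, 0 < a k) (hbpos : ∀ l, 0 < b l)
    (hfi : ∀ x : Fin (K + L + 1) → ℝ,
      (∑ k, 2 * a k * x (ixIdx K L k) * P (ixIdx K L k) x) -
      (∑ l, 2 * b l * x (iyIdx K L l) * P (iyIdx K L l) x) = 0) :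
    ∃ A : Fin K → Fin L → ℝ, (∀ k l, 0 ≤ A k l) ∧
      (∀ x k, P (ixIdx K L k) x =
        ∑ l, b l * A k l * x (iyIdx K L l) * x (izIdx K L)) ∧
      (∀ x l, P (iyIdx K L l) x =
        ∑ k, a k * A k l * x (ixIdx K L k) * x (izIdx K L)) ∧
      (∀ x, P (izIdx K L) x =
        -(((∑ k, ϱ (ixIdx K L k) * P (ixIdx K L k) x) +
           (∑ l, ϱ (iyIdx K L l) * P (iyIdx K L l) x)) / ϱ (izIdx K L))) := by
  obtain rfl : P = quadraticField Q R c := funext fun i => funext (hP i)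
  have hfiW := isDiagonalFirstIntegral_firstIntegralWeight hfi
  have hz := firstIntegralWeight_izIdx (L := L) a b
  have hW (j : Fin (K + L + 1)) := firstIntegralWeight_ne_zero (i := j) hapos hbpos
  have hrow {i : Fin (K + L + 1)} :=
    quadraticField_eq_sum_mul_mul hϱ hmc hfiW hQ1 hQ2 hR hz hW (i := i)
  have hQzz {i : Fin (K + L + 1)} (hi : i ≠ izIdx K L) :=
    hfiW.coeff_diag_eq_zero_of_weight_eq_zero hz (hW i hi)
  have hsame {i j : Fin (K + L + 1)} :=
    coeff_eq_zero_of_weight_mul_pos hfiW hQ2 hz (i := i) (j := j)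
  refine ⟨fun k l => (Q (ixIdx K L k) (iyIdx K L l) (izIdx K L)
      + Q (ixIdx K L k) (izIdx K L) (iyIdx K L l)) / b l, fun k l => div_nonneg
      (hQ2 _ _ _ (iyIdx_ne_ixIdx k l) (ixIdx_ne_izIdx k).symm (iyIdx_ne_izIdx l)) (hbpos l).le,
    fun x k => ?_, fun x l => ?_, fun x => ?_⟩
  · rw [hrow (ixIdx_ne_izIdx k), sum_univ_eq_sum_ixIdx_add_sum_iyIdx_add]
    simp only [hsame (firstIntegralWeight_ixIdx_mul_pos hapos k _), hQzz (ixIdx_ne_izIdx k), zero_mul, sum_const_zero, zero_add, add_zero]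
    refine sum_congr rfl fun l _ => ?_
    field_simp [(hbpos l).ne']
  · rw [hrow (iyIdx_ne_izIdx l), sum_univ_eq_sum_ixIdx_add_sum_iyIdx_add]
    simp only [hsame (firstIntegralWeight_iyIdx_mul_pos hbpos l _), hQzz (iyIdx_ne_izIdx l), zero_mul, sum_const_zero, add_zero]
    refine sum_congr rfl fun k _ => ?_
    have h := hfiW.weighted_coeff_add_eq_zero hz (ixIdx K L k) (iyIdx K L l)
    simp only [firstIntegralWeight_ixIdx, firstIntegralWeight_iyIdx] at h
    field_simp [(hbpos l).ne']
    linear_combination (-(x (ixIdx K L k) * x (izIdx K L)) / 2) * h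
  · exact IsMassConserving.apply_izIdx_eq hmc (hϱ _).ne' x

open Finset in
/-- A kinetic, kinetically mass conserving quadratic system on
`ℝ^(K+L+1)` having `V = Σ a_k x_k² − Σ b_l y_l²` (all `a_k, b_l > 0`) as a
first integral must have the form `X_k = Σ_l b_l A_{k,l} y_l z`,
`Y_l = Σ_k a_k A_{k,l} x_k z`, `Z = −(Σ ϱ^x_k X_k + Σ ϱ^y_l Y_l)/ϱ^z`
with `A_{k,l} ≥ 0`. -/
theorem stmt_16 (K L : ℕ) (hK : 1 ≤ K) (hL : 1 ≤ L)
    (Q : Fin (K + L + 1) → Fin (K + L + 1) → Fin (K + L + 1) → ℝ)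
    (R : Fin (K + L + 1) → Fin (K + L + 1) → ℝ)
    (c : Fin (K + L + 1) → ℝ)
    (P : Fin (K + L + 1) → (Fin (K + L + 1) → ℝ) → ℝ)
    -- P is a quadratic polynomial system:
    (hP : ∀ i x, P i x =
      (∑ j, ∑ k, Q i j k * x j * x k) + (∑ j, R i j * x j) + c i)
    -- the system is kinetic (monomials not containing the own variable
    -- have nonnegative coefficients):
    (hQ1 : ∀ i j, j ≠ i → 0 ≤ Q i j j)
    (hQ2 : ∀ i j k, j ≠ i → k ≠ i → j ≠ k → 0 ≤ Q i j k + Q i k j)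
    (hR : ∀ i j, j ≠ i → 0 ≤ R i j)
    (hc : ∀ i, 0 ≤ c i)
    -- the system is kinetically mass conserving with positive weights ϱ:
    (ϱ : Fin (K + L + 1) → ℝ) (hϱ : ∀ i, 0 < ϱ i)
    (hmc : ∀ x : Fin (K + L + 1) → ℝ, ∑ i, ϱ i * P i x = 0)
    -- V = Σ a_k x_k² − Σ b_l y_l² is a first integral:
    (a : Fin K → ℝ) (b : Fin L → ℝ)
    (hapos : ∀ k, 0 < a k) (hbpos : ∀ l, 0 < b l)
    (hfi : ∀ x : Fin (K + L + 1) → ℝ,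
      (∑ k, 2 * a k * x (ixIdx K L k) * P (ixIdx K L k) x) -
      (∑ l, 2 * b l * x (iyIdx K L l) * P (iyIdx K L l) x) = 0) :
    ∃ A : Fin K → Fin L → ℝ, (∀ k l, 0 ≤ A k l) ∧
      (∀ x k, P (ixIdx K L k) x =
        ∑ l, b l * A k l * x (iyIdx K L l) * x (izIdx K L)) ∧
      (∀ x l, P (iyIdx K L l) x =
        ∑ k, a k * A k l * x (ixIdx K L k) * x (izIdx K L)) ∧
      (∀ x, P (izIdx K L) x =
        -(((∑ k, ϱ (ixIdx K L k) * P (ixIdx K L k) x) +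
           (∑ l, ϱ (iyIdx K L l) * P (iyIdx K L l) x)) / ϱ (izIdx K L))) :=
  stmt_16_general K L Q R c P hP hQ1 hQ2 hR ϱ hϱ hmc a b hapos hbpos hfi
end
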